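/- For every integer k ≥ 1, let (U_n)_{n≥0} be the Shallit sequence defined by U_0 = 0, U_1 = 1, and U_{n+2} = (4k+2)·U_{n+1} − U_n for all n ≥ 0. Then for every integer e ≥ 1 the terms U_0, U_1, …, U_{2^e − 1} are pairwise incongruent modulo 2^e; consequently the discriminator satisfies D_U(2^e) = 2^e for every e ≥ 1. -/

import Mathlib

/-!
For the companion sequence `V` (`V 0 = 2`, `V 1 = P`) one has `U (c + 2b) - U c = V (c + b) * U b`.
When `P ≡ 2 [ZMOD 4]`, every `V n` is twice an odd number and `U n ≡ n [ZMOD 2]`, so induction on `e`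
gives `2^e ∣ U j - U i ↔ 2^e ∣ j - i`: indices of different parity are already separated modulo 2,
and for `j = i + 2d` the identity reduces level `e + 1` for `(i, j)` to level `e` for `(0, d)`.
Hence `U` is injective modulo `2^e` on `[0, 2^e)`, and pigeonhole gives `D_U(2^e) = 2^e`.
-/

/-- The discriminator of a sequence `U`: the smallest positive integer `m` such that
`U 0, …, U (n-1)` are pairwise incongruent modulo `m`. -/
noncomputable def discriminator (U : ℕ → ℤ) (n : ℕ) : ℕ :=
  sInf {m : ℕ | 0 < m ∧ ∀ i < n, ∀ j < n, U i ≡ U j [ZMOD (m : ℤ)] → i = j}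

def lucasU (P : ℤ) : ℕ → ℤ
  | 0 => 0
  | 1 => 1
  | n + 2 => P * lucasU P (n + 1) - lucasU P n

def lucasV (P : ℤ) : ℕ → ℤ
  | 0 => 2
  | 1 => P
  | n + 2 => P * lucasV P (n + 1) - lucasV P n

section

variable {P : ℤ}

@[simp] lemma lucasU_zero : lucasU P 0 = 0 := rfl
@[simp] lemma lucasU_one : lucasU P 1 = 1 := rfl
lemma lucasU_add_two (n : ℕ) : lucasU P (n + 2) = P * lucasU P (n + 1) - lucasU P n := rfl
lemma lucasV_add_two (n : ℕ) : lucasV P (n + 2) = P * lucasV P (n + 1) - lucasV P n := rfl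

lemma eq_lucasU {U : ℕ → ℤ} (h0 : U 0 = 0) (h1 : U 1 = 1)
    (hrec : ∀ n, U (n + 2) = P * U (n + 1) - U n) : U = lucasU P := by
  funext n
  induction n using Nat.twoStepInduction with
  | zero => exact h0
  | one => exact h1
  | more n ih₀ ih₁ => rw [hrec, lucasU_add_two, ih₀, ih₁]

lemma lucasV_succ (n : ℕ) : lucasV P (n + 1) = lucasU P (n + 2) - lucasU P n := by
  induction n using Nat.twoStepInduction with
  | zero => simp [lucasV, lucasU_add_two]
  | one => show P * P - 2 = P * (P * 1 - 0) - 1 - 1; ring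
  | more n ih₀ ih₁ =>
    rw [lucasV_add_two, ih₀, ih₁]
    linear_combination lucasU_add_two (P := P) n - lucasU_add_two (P := P) (n + 2)

lemma lucasV_mul_lucasU (b c : ℕ) :
    lucasV P (c + b) * lucasU P b = lucasU P (c + 2 * b) - lucasU P c := by
  induction b using Nat.twoStepInduction generalizing c with
  | zero => simp
  | one => simpa using lucasV_succ c
  | more b ih₀ ih₁ =>
    have h₁ := ih₁ (c + 1)
    have h₀ := ih₀ (c + 2)
    rw [show c + 1 + (b + 1) = c + b + 2 by omega, show c + 1 + 2 * (b + 1) = c + 2 * b + 3 by omega]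
      at h₁
    rw [show c + 2 + b = c + b + 2 by omega, show c + 2 + 2 * b = c + 2 * b + 2 by omega] at h₀
    rw [show c + (b + 2) = c + b + 2 by omega, show c + 2 * (b + 2) = c + 2 * b + 2 + 2 by omega,
      lucasU_add_two b, lucasU_add_two (c + 2 * b + 2)]
    linear_combination P * h₁ - h₀ + lucasU_add_two (P := P) c

lemma lucasU_modEq_two (hP : 2 ∣ P) (n : ℕ) : lucasU P n ≡ n [ZMOD 2] := by
  induction n using Nat.twoStepInduction with
  | zero => rfl
  | one => rfl
  | more n ih₀ _ =>
    calc lucasU P (n + 2) = P * lucasU P (n + 1) - lucasU P n := rfl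
      _ ≡ 0 * lucasU P (n + 1) - n [ZMOD 2] := ((Int.modEq_zero_iff_dvd.2 hP).mul_right _).sub ih₀
      _ ≡ ↑(n + 2) [ZMOD 2] := Int.modEq_iff_dvd.2 ⟨n + 1, by push_cast; ring⟩

lemma lucasV_modEq_four (hP : P ≡ 2 [ZMOD 4]) (n : ℕ) : lucasV P n ≡ 2 [ZMOD 4] := by
  induction n using Nat.twoStepInduction with
  | zero => rfl
  | one => exact hP
  | more n ih₀ ih₁ =>
    calc lucasV P (n + 2) = P * lucasV P (n + 1) - lucasV P n := rfl
      _ ≡ 2 * 2 - 2 [ZMOD 4] := (hP.mul ih₁).sub ih₀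
      _ ≡ 2 [ZMOD 4] := by decide

lemma two_dvd_lucasU_sub_iff (hP : 2 ∣ P) (i j : ℕ) :
    2 ∣ lucasU P j - lucasU P i ↔ 2 ∣ (j : ℤ) - i :=
  ((lucasU_modEq_two hP j).sub (lucasU_modEq_two hP i)).dvd_iff

lemma two_pow_dvd_lucasU_sub_iff (hP : P ≡ 2 [ZMOD 4]) (e i j : ℕ) :
    2 ^ e ∣ lucasU P j - lucasU P i ↔ 2 ^ e ∣ (j : ℤ) - i := by
  induction e generalizing i j with
  | zero => simp
  | succ e ih =>
    wlog hij : i ≤ j generalizing i j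
    · rw [dvd_sub_comm, this j i (by omega), dvd_sub_comm]
    obtain ⟨m, rfl⟩ := Nat.exists_eq_add_of_le hij
    obtain ⟨d, rfl | rfl⟩ := Nat.even_or_odd' m
    · obtain ⟨t, ht⟩ := (lucasV_modEq_four hP (i + d)).symm.dvd
      have hV : lucasV P (i + d) = 2 * (2 * t + 1) := by linear_combination ht
      have hw : IsCoprime ((2 : ℤ) ^ e) (2 * t + 1) :=
        (Int.isCoprime_two_left.2 (odd_two_mul_add_one t)).pow_left
      have hd := ih 0 d
      rw [lucasU_zero, sub_zero, Nat.cast_zero, sub_zero] at hd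
      rw [← lucasV_mul_lucasU, hV, Nat.cast_add, add_sub_cancel_left, pow_succ', mul_assoc,
        Nat.cast_mul, Nat.cast_ofNat, mul_dvd_mul_iff_left two_ne_zero,
        mul_dvd_mul_iff_left two_ne_zero, ← hd]
      exact ⟨hw.dvd_of_dvd_mul_left, (Dvd.dvd.mul_left · _)⟩
    · have hP2 : (2 : ℤ) ∣ P := by have := hP.dvd; omega
      have h2 : (2 : ℤ) ∣ 2 ^ (e + 1) := dvd_pow_self 2 e.succ_ne_zero
      refine iff_of_false (fun h ↦ ?_) (fun h ↦ ?_)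
      · have := (two_dvd_lucasU_sub_iff hP2 i _).1 (h2.trans h)
        push_cast at this
        omega
      · have := h2.trans h
        push_cast at this
        omega

theorem lucasU_modEq_lucasU_iff (hP : P ≡ 2 [ZMOD 4]) (e i j : ℕ) :
    lucasU P i ≡ lucasU P j [ZMOD 2 ^ e] ↔ i ≡ j [MOD 2 ^ e] := by
  rw [← Int.natCast_modEq_iff, Int.modEq_iff_dvd, Int.modEq_iff_dvd,
    two_pow_dvd_lucasU_sub_iff hP, Nat.cast_pow, Nat.cast_ofNat]

end

lemma discriminator_eq_self {U : ℕ → ℤ} {n : ℕ} (hn : 0 < n)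
    (h : ∀ i < n, ∀ j < n, U i ≡ U j [ZMOD (n : ℤ)] → i = j) : discriminator U n = n := by
  have hle : ∀ m ∈ {m : ℕ | 0 < m ∧ ∀ i < n, ∀ j < n, U i ≡ U j [ZMOD (m : ℤ)] → i = j}, n ≤ m := by
    rintro m ⟨hm, hinj⟩
    have : NeZero m := ⟨hm.ne'⟩
    have hU : Function.Injective (fun i : Fin n ↦ (U i : ZMod m)) := fun i j hij ↦
      Fin.ext (hinj i i.isLt j j.isLt ((ZMod.intCast_eq_intCast_iff' _ _ _).1 hij))
    simpa using Fintype.card_le_of_injective _ hU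
  exact le_antisymm (Nat.sInf_le ⟨hn, h⟩) (le_csInf ⟨n, hn, h⟩ hle)

theorem stmt15_general (k : ℕ) (U : ℕ → ℤ) (h0 : U 0 = 0) (h1 : U 1 = 1)
    (hrec : ∀ n : ℕ, U (n + 2) = (4 * (k : ℤ) + 2) * U (n + 1) - U n) :
    ∀ e : ℕ, 1 ≤ e →
      (∀ i < 2 ^ e, ∀ j < 2 ^ e, U i ≡ U j [ZMOD (2 ^ e : ℤ)] → i = j) ∧
      discriminator U (2 ^ e) = 2 ^ e := by
  intro e _
  obtain rfl := eq_lucasU h0 h1 hrec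
  have hP : 4 * (k : ℤ) + 2 ≡ 2 [ZMOD 4] := Int.modEq_iff_dvd.2 ⟨-k, by ring⟩
  have hinj : ∀ i < 2 ^ e, ∀ j < 2 ^ e,
      lucasU (4 * k + 2) i ≡ lucasU (4 * k + 2) j [ZMOD (2 ^ e : ℤ)] → i = j :=
    fun i hi j hj hij ↦ ((lucasU_modEq_lucasU_iff hP e i j).1 hij).eq_of_lt_of_lt hi hj
  refine ⟨hinj, discriminator_eq_self (by positivity) ?_⟩
  exact_mod_cast hinj

/-- For every `k ≥ 1`, the Shallit sequence `U 0 = 0`, `U 1 = 1`,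
`U (n+2) = (4k+2)·U (n+1) − U n` has `U 0, …, U (2^e − 1)` pairwise incongruent modulo
`2^e` for every `e ≥ 1`; consequently `D_U(2^e) = 2^e` for every `e ≥ 1`. -/
theorem stmt15 (k : ℕ) (hk : 1 ≤ k) (U : ℕ → ℤ) (h0 : U 0 = 0) (h1 : U 1 = 1)
    (hrec : ∀ n : ℕ, U (n + 2) = (4 * (k : ℤ) + 2) * U (n + 1) - U n) :
    ∀ e : ℕ, 1 ≤ e →
      (∀ i < 2 ^ e, ∀ j < 2 ^ e, U i ≡ U j [ZMOD (2 ^ e : ℤ)] → i = j) ∧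
      discriminator U (2 ^ e) = 2 ^ e :=
  stmt15_general k U h0 h1 hrec
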